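/- arXiv:2305.02114 — 4 statements merged into one kernel-verified Lean document; each statement's English description precedes it below -/
import Mathlib

section
/- For 0 < κ ≤ 1, the function h_κ(x) = ln(κ·Γ(x))/(x-1) is strictly increasing on (1,∞). -/
/-!
`log Γ` is strictly convex on `(0, ∞)` and vanishes at `1`, so `log Γ(x) / (x - 1)` is the slope of
its secant through `1`, which is strictly increasing in `x`. Adding `log κ / (x - 1)`, which is
nondecreasing on `(1, ∞)` because `log κ ≤ 0`, keeps it strictly increasing.
-/

open Real Set

/-- Strict convexity of `log Γ`, from `log Γ(x) = log Γ(x + 1) - log x`. -/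
theorem strictConvexOn_log_Gamma : StrictConvexOn ℝ (Ioi 0) (log ∘ Gamma) := by
  have hshift : ConvexOn ℝ (Ioi 0) fun x => log (Gamma (x + 1)) :=
    (convexOn_log_Gamma.translate_left 1).subset
      (fun x (hx : 0 < x) => show (0 : ℝ) < 1 + x by linarith) (convex_Ioi 0) |>.congr
      fun x _ => by simp
  refine (hshift.add_strictConvexOn strictConcaveOn_log_Ioi.neg).congr fun x (hx : 0 < x) => ?_
  simp only [Pi.add_apply, Pi.neg_apply, Function.comp_apply]
  rw [Gamma_add_one hx.ne', log_mul hx.ne' (Gamma_pos_of_pos hx).ne']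
  ring

theorem strictMonoOn_log_Gamma_div_sub_one :
    StrictMonoOn (fun x => log (Gamma x) / (x - 1)) (Ioi 1) := by
  intro x (hx : 1 < x) y (hy : 1 < y) hxy
  have hpos : ∀ {z : ℝ}, 1 < z → z ∈ Ioi (0 : ℝ) := fun hz => lt_trans one_pos hz
  simpa [Gamma_one] using strictConvexOn_log_Gamma.secant_strict_mono (a := 1)
    (mem_Ioi.2 one_pos) (hpos hx) (hpos hy) hx.ne' hy.ne' hxy

theorem monotoneOn_div_sub_of_nonpos {c : ℝ} (hc : c ≤ 0) (a : ℝ) :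
    MonotoneOn (fun x => c / (x - a)) (Ioi a) := by
  intro x (hx : a < x) y (hy : a < y) hxy
  simp only [div_eq_mul_inv]
  exact mul_le_mul_of_nonpos_left (inv_anti₀ (sub_pos.2 hx) (by linarith)) hc

theorem h_strictMono_of_kappa_le_one (κ : ℝ) (hκ0 : 0 < κ) (hκ1 : κ ≤ 1) :
    StrictMonoOn (fun x => Real.log (κ * Real.Gamma x) / (x - 1)) (Set.Ioi 1) := by
  have hsum := strictMonoOn_log_Gamma_div_sub_one.add_monotone
    (monotoneOn_div_sub_of_nonpos (log_nonpos hκ0.le hκ1) 1)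
  refine hsum.congr fun x (hx : 1 < x) => ?_
  rw [log_mul hκ0.ne' (Gamma_pos_of_pos (by linarith)).ne', add_div, add_comm]
end

section
/- For κ > 1, with x₀(κ) the unique zero in (1,∞) of φ_κ(x) = (x-1)ψ(x) - ln(κΓ(x)), the function h_κ(x) = ln(κΓ(x))/(x-1) is strictly decreasing on (1, x₀(κ)) and strictly increasing on (x₀(κ), ∞); hence min_{x>1} h_κ(x) = h_κ(x₀(κ)). -/
/-!
`φ_κ` is the numerator of the derivative `h_κ' = φ_κ / (x - 1)²`. Since `log (κ Γ)` has
derivative `ψ`, the mean value theorem together with the strict monotonicity of `ψ` makes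
`φ_κ(x) = (x - 1) ψ(x) - log (κ Γ(x))` strictly increasing on `(1, ∞)`, so `h_κ'` changes sign
exactly once, from negative to positive, at the zero `x₀` of `φ_κ`. Strict monotonicity of `ψ`
follows from the convexity of `log Γ` (Bohr–Mollerup) and the recurrence `ψ(x + 1) = ψ(x) + 1/x`:
if `ψ(a) = ψ(b)` with `a < b`, then `ψ(a + 1) > ψ(b + 1)`.
-/

open Real

noncomputable def digamma (x : ℝ) : ℝ := deriv (fun y => Real.log (Real.Gamma y)) x

open Set

section QuotientBySlope

variable {f f' : ℝ → ℝ} {c : ℝ}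

theorem strictMonoOn_sub_mul_deriv_sub (hf : ∀ x ∈ Ioi c, HasDerivAt f (f' x) x)
    (hf' : StrictMonoOn f' (Ioi c)) :
    StrictMonoOn (fun x => (x - c) * f' x - f x) (Ioi c) := by
  intro a (ha : c < a) b (hb : c < b) hab
  obtain ⟨ξ, hξ, hslope⟩ := exists_hasDerivAt_eq_slope f f' hab
    (fun x hx => (hf x (ha.trans_le hx.1)).continuousAt.continuousWithinAt)
    (fun x hx => hf x (ha.trans hx.1))
  have hmvt : f b - f a = f' ξ * (b - a) := by
    rw [hslope, div_mul_cancel₀ _ (sub_ne_zero.mpr hab.ne')]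
  have hξb : 0 < (b - a) * (f' b - f' ξ) :=
    mul_pos (sub_pos.mpr hab) (sub_pos.mpr (hf' (ha.trans hξ.1) hb hξ.2))
  have hab' : 0 < (a - c) * (f' b - f' a) :=
    mul_pos (sub_pos.mpr ha) (sub_pos.mpr (hf' ha hb hab))
  -- the increment equals `(b - a) (f' b - f' ξ) + (a - c) (f' b - f' a)`
  show (a - c) * f' a - f a < (b - c) * f' b - f b
  nlinarith

theorem HasDerivAt.div_sub_const {x : ℝ} (hf : HasDerivAt f (f' x) x) (hx : x ≠ c) :
    HasDerivAt (fun y => f y / (y - c)) (((x - c) * f' x - f x) / (x - c) ^ 2) x :=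
  (hf.div ((hasDerivAt_id' x).sub_const c) (sub_ne_zero.mpr hx)).congr_deriv (by ring)

theorem strictAntiOn_strictMonoOn_div_sub (hf : ∀ x ∈ Ioi c, HasDerivAt f (f' x) x)
    (hf' : StrictMonoOn f' (Ioi c)) {x₀ : ℝ} (hx₀ : c < x₀)
    (hzero : (x₀ - c) * f' x₀ - f x₀ = 0) :
    StrictAntiOn (fun x => f x / (x - c)) (Ioc c x₀) ∧
      StrictMonoOn (fun x => f x / (x - c)) (Ici x₀) := by
  have hg := strictMonoOn_sub_mul_deriv_sub hf hf'
  have hderiv : ∀ x ∈ Ioi c, HasDerivAt (fun y => f y / (y - c))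
      (((x - c) * f' x - f x) / (x - c) ^ 2) x :=
    fun x hx => (hf x hx).div_sub_const (ne_of_gt hx)
  constructor
  · refine strictAntiOn_of_deriv_neg (convex_Ioc c x₀)
      (fun x hx => (hderiv x hx.1).continuousAt.continuousWithinAt) fun x hx => ?_
    rw [interior_Ioc] at hx
    rw [(hderiv x hx.1).deriv]
    have hneg := hg hx.1 hx₀ hx.2
    simp only [hzero] at hneg
    exact div_neg_of_neg_of_pos hneg (pow_pos (sub_pos.mpr hx.1) 2)
  · refine strictMonoOn_of_deriv_pos (convex_Ici x₀)
      (fun x hx => (hderiv x (hx₀.trans_le hx)).continuousAt.continuousWithinAt) fun x hx => ?_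
    rw [interior_Ici] at hx
    have hx' : c < x := hx₀.trans hx
    rw [(hderiv x hx').deriv]
    have hpos := hg hx₀ hx' hx
    simp only [hzero] at hpos
    exact div_pos hpos (pow_pos (sub_pos.mpr hx') 2)

end QuotientBySlope

theorem le_of_antitoneOn_Ioc_of_monotoneOn_Ici {α β : Type*} [LinearOrder α] [Preorder β]
    {g : α → β} {c x₀ x : α} (hanti : AntitoneOn g (Ioc c x₀)) (hmono : MonotoneOn g (Ici x₀))
    (hx₀ : c < x₀) (hx : c < x) : g x₀ ≤ g x := by
  rcases le_total x x₀ with h | h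
  · exact hanti ⟨hx, h⟩ ⟨hx₀, le_rfl⟩ h
  · exact hmono (mem_Ici.2 le_rfl) h h

theorem hasDerivAt_log_Gamma {x : ℝ} (hx : 0 < x) :
    HasDerivAt (fun y => log (Gamma y)) (digamma x) x :=
  ((differentiableAt_Gamma fun m => by linarith [m.cast_nonneg (α := ℝ)]).log
    (Gamma_pos_of_pos hx).ne').hasDerivAt

theorem hasDerivAt_log_const_mul_Gamma {κ x : ℝ} (hκ : κ ≠ 0) (hx : 0 < x) :
    HasDerivAt (fun y => log (κ * Gamma y)) (digamma x) x := by
  refine ((hasDerivAt_log_Gamma hx).const_add (log κ)).congr_of_eventuallyEq ?_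
  filter_upwards [Ioi_mem_nhds hx] with y (hy : 0 < y)
  rw [log_mul hκ (Gamma_pos_of_pos hy).ne']

theorem digamma_add_one {x : ℝ} (hx : 0 < x) : digamma (x + 1) = digamma x + 1 / x := by
  have hshift : HasDerivAt (fun y => log (Gamma (y + 1))) (digamma (x + 1)) x := by
    simpa using (hasDerivAt_log_Gamma (by linarith : 0 < x + 1)).comp_add_const x 1
  have hrec : (fun y => log (Gamma (y + 1))) =ᶠ[nhds x] fun y => log (Gamma y) + log y := by
    filter_upwards [Ioi_mem_nhds hx] with y (hy : 0 < y)
    rw [Gamma_add_one hy.ne', log_mul hy.ne' (Gamma_pos_of_pos hy).ne', add_comm]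
  rw [one_div]
  exact hshift.unique (((hasDerivAt_log_Gamma hx).add (hasDerivAt_log hx.ne')).congr_of_eventuallyEq
    hrec)

theorem monotoneOn_digamma : MonotoneOn digamma (Ioi 0) :=
  convexOn_log_Gamma.monotoneOn_deriv fun _ hx => (hasDerivAt_log_Gamma hx).differentiableAt

theorem strictMonoOn_digamma : StrictMonoOn digamma (Ioi 0) := by
  intro a (ha : 0 < a) b (hb : 0 < b) hab
  refine lt_of_le_of_ne (monotoneOn_digamma ha hb hab.le) fun heq => ?_
  have hshift := monotoneOn_digamma (by linarith : 0 < a + 1) (by linarith : 0 < b + 1)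
    (by linarith : a + 1 ≤ b + 1)
  rw [digamma_add_one ha, digamma_add_one hb, heq] at hshift
  linarith [one_div_lt_one_div_of_lt ha hab]

theorem h_min_at_x0 (κ : ℝ) (hκ : 1 < κ) (x₀ : ℝ) (hx₀ : 1 < x₀)
    (hzero : (x₀ - 1) * digamma x₀ - Real.log (κ * Real.Gamma x₀) = 0) :
    StrictAntiOn (fun x => Real.log (κ * Real.Gamma x) / (x - 1)) (Set.Ioc 1 x₀) ∧
    StrictMonoOn (fun x => Real.log (κ * Real.Gamma x) / (x - 1)) (Set.Ici x₀) ∧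
    (∀ x : ℝ, 1 < x →
      Real.log (κ * Real.Gamma x₀) / (x₀ - 1) ≤ Real.log (κ * Real.Gamma x) / (x - 1)) := by
  have hderiv : ∀ x ∈ Ioi (1 : ℝ), HasDerivAt (fun y => log (κ * Gamma y)) (digamma x) x :=
    fun x hx => hasDerivAt_log_const_mul_Gamma (by linarith) (zero_lt_one.trans hx)
  obtain ⟨hanti, hmono⟩ := strictAntiOn_strictMonoOn_div_sub hderiv
    (strictMonoOn_digamma.mono (Ioi_subset_Ioi zero_le_one)) hx₀ hzero
  exact ⟨hanti, hmono, fun x hx =>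
    le_of_antitoneOn_Ioc_of_monotoneOn_Ici hanti.antitoneOn hmono.monotoneOn hx₀ hx⟩
end

section
/- For κ > 1, define g_κ(α) = 1 - exp(-(κ·Γ(1/α + 1))^α) for α > 0. Then g_κ attains its minimum over (0,∞) at α₀(κ) = 1/(x₀(κ) - 1), where x₀(κ) is the unique zero in (1,∞) of φ_κ(x) = (x-1)ψ(x) - ln(κΓ(x)). -/
open Real

/-!
Substituting `x = 1/α + 1` gives `(κ Γ(1/α + 1))^α = exp (log (κ Γ x) / (x - 1))`, so it suffices to
minimise `log (κ Γ x) / (x - 1)` over `x > 1`. Since `log ∘ Γ` is convex on `(0, ∞)`, it lies above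
its tangent at `x₀`; together with `φ_κ(x₀) = 0` this reads `log (κ Γ x) ≥ (x - 1) ψ(x₀)`, i.e.
`log (κ Γ x) / (x - 1) ≥ ψ(x₀)`, with equality at `x = x₀`.
-/

theorem ConvexOn.add_deriv_mul_sub_le {S : Set ℝ} {f : ℝ → ℝ} {x y : ℝ} (hf : ConvexOn ℝ S f)
    (hx : x ∈ S) (hy : y ∈ S) (hfx : DifferentiableAt ℝ f x) :
    f x + deriv f x * (y - x) ≤ f y := by
  rcases lt_trichotomy x y with hxy | rfl | hyx
  · have hslope := hf.deriv_le_slope hx hy hxy hfx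
    rw [slope_def_field, le_div_iff₀ (sub_pos.2 hxy)] at hslope
    linarith
  · simp
  · have hslope := hf.slope_le_deriv hy hx hyx hfx
    rw [slope_def_field, div_le_iff₀ (sub_pos.2 hyx)] at hslope
    linarith

theorem log_Gamma_add_digamma_mul_sub_le {x y : ℝ} (hx : 0 < x) (hy : 0 < y) :
    log (Gamma x) + digamma x * (y - x) ≤ log (Gamma y) := by
  have hΓ : DifferentiableAt ℝ Gamma x :=
    differentiableAt_Gamma fun m => (hx.trans_le' (by simp)).ne'
  exact convexOn_log_Gamma.add_deriv_mul_sub_le hx hy (hΓ.log (Gamma_pos_of_pos hx).ne')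

theorem sub_one_mul_digamma_le_log_mul_Gamma {κ x₀ x : ℝ} (hκ : 0 < κ) (hx₀ : 0 < x₀)
    (hzero : (x₀ - 1) * digamma x₀ - log (κ * Gamma x₀) = 0) (hx : 0 < x) :
    (x - 1) * digamma x₀ ≤ log (κ * Gamma x) := by
  rw [log_mul hκ.ne' (Gamma_pos_of_pos hx).ne']
  rw [log_mul hκ.ne' (Gamma_pos_of_pos hx₀).ne'] at hzero
  linarith [log_Gamma_add_digamma_mul_sub_le hx₀ hx]

theorem g_min_at_alpha0 (κ : ℝ) (hκ : 1 < κ) (x₀ : ℝ) (hx₀ : 1 < x₀)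
    (hzero : (x₀ - 1) * digamma x₀ - Real.log (κ * Real.Gamma x₀) = 0) :
    ∀ α : ℝ, 0 < α →
      1 - Real.exp (-(κ * Real.Gamma (1 / (1 / (x₀ - 1)) + 1)) ^ (1 / (x₀ - 1)))
        ≤ 1 - Real.exp (-(κ * Real.Gamma (1 / α + 1)) ^ α) := by
  intro α hα
  have hκ₀ : 0 < κ := by linarith
  have hx₀₁ : x₀ - 1 ≠ 0 := by linarith
  have hα₀ : 1 / (1 / (x₀ - 1)) + 1 = x₀ := by rw [one_div_one_div]; ring
  have hexponent : log (κ * Gamma x₀) * (1 / (x₀ - 1)) ≤ log (κ * Gamma (1 / α + 1)) * α :=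
    calc log (κ * Gamma x₀) * (1 / (x₀ - 1)) = digamma x₀ := by
          rw [← sub_eq_zero.1 hzero]; field_simp
      _ = (1 / α + 1 - 1) * digamma x₀ * α := by field_simp; ring
      _ ≤ log (κ * Gamma (1 / α + 1)) * α := by
          gcongr
          exact sub_one_mul_digamma_le_log_mul_Gamma hκ₀ (by linarith) hzero (by positivity)
  rw [hα₀, rpow_def_of_pos (mul_pos hκ₀ (Gamma_pos_of_pos (by linarith))),
    rpow_def_of_pos (mul_pos hκ₀ (Gamma_pos_of_pos (by positivity)))]
  gcongr
end

section
/- For κ > 1, with x₀(κ) the unique zero in (0,1) of φ_κ(x) = 1 - 1/x - ln(x/κ), the function h_κ(x) = ln(x/κ)/(x-1) is strictly decreasing on (0, x₀(κ)) and strictly increasing on (x₀(κ), 1); hence min_{x ∈ (0,1)} h_κ(x) = h_κ(x₀(κ)). -/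
/-!
Writing `φ_κ(x) = 1 - 1/x - log (x/κ)`, the quotient rule gives `h_κ' = φ_κ / (x - 1)²`, so `h_κ'`
has the sign of `φ_κ`. Since `φ_κ' = (1 - x)/x² > 0` on `(0, 1)`, `φ_κ` is strictly increasing
there, hence negative before its zero `x₀` and positive after it.
-/

open Real Set

lemma strictAntiOn_Ioc_of_hasDerivAt_neg {f f' : ℝ → ℝ} {a c : ℝ}
    (hf : ∀ x ∈ Ioc a c, HasDerivAt f (f' x) x) (hf' : ∀ x ∈ Ioo a c, f' x < 0) :
    StrictAntiOn f (Ioc a c) :=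
  strictAntiOn_of_hasDerivWithinAt_neg (convex_Ioc a c)
    (fun x hx => (hf x hx).continuousAt.continuousWithinAt)
    (fun x hx => by
      rw [interior_Ioc] at hx ⊢
      exact (hf x (Ioo_subset_Ioc_self hx)).hasDerivWithinAt)
    (fun x hx => hf' x (by rwa [interior_Ioc] at hx))

lemma strictMonoOn_Ico_of_hasDerivAt_pos {f f' : ℝ → ℝ} {c b : ℝ}
    (hf : ∀ x ∈ Ico c b, HasDerivAt f (f' x) x) (hf' : ∀ x ∈ Ioo c b, 0 < f' x) :
    StrictMonoOn f (Ico c b) :=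
  strictMonoOn_of_hasDerivWithinAt_pos (convex_Ico c b)
    (fun x hx => (hf x hx).continuousAt.continuousWithinAt)
    (fun x hx => by
      rw [interior_Ico] at hx ⊢
      exact (hf x (Ioo_subset_Ico_self hx)).hasDerivWithinAt)
    (fun x hx => hf' x (by rwa [interior_Ico] at hx))

lemma isMinOn_of_strictAntiOn_Ioc_of_strictMonoOn_Ico {f : ℝ → ℝ} {a b c : ℝ}
    (hanti : StrictAntiOn f (Ioc a c)) (hmono : StrictMonoOn f (Ico c b)) (hc : c ∈ Ioo a b) :
    IsMinOn f (Ioo a b) c := by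
  refine isMinOn_iff.2 fun x hx => ?_
  rcases lt_trichotomy x c with hxc | rfl | hcx
  · exact (hanti ⟨hx.1, hxc.le⟩ ⟨hc.1, le_rfl⟩ hxc).le
  · exact le_rfl
  · exact (hmono ⟨le_rfl, hc.2⟩ ⟨hcx.le, hx.2⟩ hcx).le

theorem strictAntiOn_strictMonoOn_isMinOn_of_hasDerivAt {f f' : ℝ → ℝ} {a b c : ℝ}
    (hc : c ∈ Ioo a b) (hf : ∀ x ∈ Ioo a b, HasDerivAt f (f' x) x)
    (hneg : ∀ x ∈ Ioo a c, f' x < 0) (hpos : ∀ x ∈ Ioo c b, 0 < f' x) :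
    StrictAntiOn f (Ioc a c) ∧ StrictMonoOn f (Ico c b) ∧ IsMinOn f (Ioo a b) c := by
  have hanti := strictAntiOn_Ioc_of_hasDerivAt_neg
    (fun x hx => hf x ⟨hx.1, hx.2.trans_lt hc.2⟩) hneg
  have hmono := strictMonoOn_Ico_of_hasDerivAt_pos
    (fun x hx => hf x ⟨hc.1.trans_le hx.1, hx.2⟩) hpos
  exact ⟨hanti, hmono, isMinOn_of_strictAntiOn_Ioc_of_strictMonoOn_Ico hanti hmono hc⟩

lemma hasDerivAt_log_div_const {κ x : ℝ} (hκ : κ ≠ 0) (hx : x ≠ 0) :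
    HasDerivAt (fun x => log (x / κ)) x⁻¹ x := by
  refine ((hasDerivAt_log (div_ne_zero hx hκ)).comp x ((hasDerivAt_id x).div_const κ)).congr_deriv ?_
  field_simp

namespace Pareto

variable {κ x : ℝ}

noncomputable def h (κ x : ℝ) : ℝ := log (x / κ) / (x - 1)

noncomputable def φ (κ x : ℝ) : ℝ := 1 - 1 / x - log (x / κ)

lemma hasDerivAt_φ (hκ : κ ≠ 0) (hx : x ≠ 0) : HasDerivAt (φ κ) ((1 - x) / x ^ 2) x := by
  have hφ : φ κ = fun y => 1 - y⁻¹ - log (y / κ) := funext fun y => by rw [φ, one_div]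
  rw [hφ]
  refine (((hasDerivAt_inv hx).const_sub 1).sub (hasDerivAt_log_div_const hκ hx)).congr_deriv ?_
  field_simp

lemma strictMonoOn_φ (hκ : κ ≠ 0) : StrictMonoOn (φ κ) (Ioo 0 1) :=
  strictMonoOn_of_hasDerivWithinAt_pos (convex_Ioo 0 1)
    (fun x hx => (hasDerivAt_φ hκ hx.1.ne').continuousAt.continuousWithinAt)
    (fun x hx => by
      rw [interior_Ioo] at hx ⊢
      exact (hasDerivAt_φ hκ hx.1.ne').hasDerivWithinAt)
    (fun x hx => by
      rw [interior_Ioo] at hx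
      exact div_pos (sub_pos.2 hx.2) (pow_pos hx.1 2))

lemma hasDerivAt_h (hκ : κ ≠ 0) (hx : x ≠ 0) (hx₁ : x ≠ 1) :
    HasDerivAt (h κ) (φ κ x / (x - 1) ^ 2) x := by
  have hx₁' : x - 1 ≠ 0 := sub_ne_zero.2 hx₁
  refine ((hasDerivAt_log_div_const hκ hx).div ((hasDerivAt_id x).sub_const 1) hx₁').congr_deriv ?_
  rw [φ, id]
  field_simp

end Pareto

open Pareto in
theorem h_pareto_min_at_x0 (κ : ℝ) (hκ : 1 < κ) (x₀ : ℝ) (hx₀ : x₀ ∈ Set.Ioo (0:ℝ) 1)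
    (hzero : 1 - 1 / x₀ - Real.log (x₀ / κ) = 0) :
    StrictAntiOn (fun x => Real.log (x / κ) / (x - 1)) (Set.Ioc 0 x₀) ∧
    StrictMonoOn (fun x => Real.log (x / κ) / (x - 1)) (Set.Ico x₀ 1) ∧
    (∀ x ∈ Set.Ioo (0:ℝ) 1,
      Real.log (x₀ / κ) / (x₀ - 1) ≤ Real.log (x / κ) / (x - 1)) := by
  have hκ₀ : κ ≠ 0 := (zero_lt_one.trans hκ).ne'
  have hφ₀ : φ κ x₀ = 0 := hzero
  obtain ⟨hanti, hmono, hmin⟩ := strictAntiOn_strictMonoOn_isMinOn_of_hasDerivAt hx₀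
    (fun x hx => hasDerivAt_h hκ₀ hx.1.ne' hx.2.ne)
    (fun x hx => div_neg_of_neg_of_pos
      (hφ₀ ▸ strictMonoOn_φ hκ₀ ⟨hx.1, hx.2.trans hx₀.2⟩ hx₀ hx.2)
      (sq_pos_of_neg (sub_neg.2 (hx.2.trans hx₀.2))))
    (fun x hx => div_pos
      (hφ₀ ▸ strictMonoOn_φ hκ₀ hx₀ ⟨hx₀.1.trans hx.1, hx.2⟩ hx.1)
      (sq_pos_of_neg (sub_neg.2 hx.2)))
  exact ⟨hanti, hmono, hmin⟩
end
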